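/- Recurrence for generating series, negative part (Lemma 4.6(2), rewritten in the variable S = t^{−1} and with denominators cleared). Let n ≥ 1 and let k < 0 be an integer. Then in the formal power series ring R_{n+1}[[S]] one has (S − t_{n+1}^k) · Σ_{m≥1} χ_{n,km} S^m = S · Σ_{m≥1} χ_{n−1,km} S^m + Σ_{j=1}^{|k|−1} t_{n+1}^{k+j} · ( Σ_{m≥1} χ_{n−1,km+j} S^m ) (for k = −1 the last sum is empty). -/

import Mathlib

open Finset

noncomputable section

/-- The Laurent polynomial `χ_{n,l}` of the paper, with `m = n + 1` variables, interpreted at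
units `t 0, …, t (m-1)` of a commutative ring `A`.  For `l ≥ 0` it is the sum of all monomials
`t₁^{-r₁} ⋯ t_m^{-r_m}` with `r₁ + ⋯ + r_m = l`; it vanishes for `-m < l < 0`; and for
`l ≤ -m` it is `(-1)^(m-1) t₁⋯t_m` times the sum of all monomials of degree `-l - m`. -/
def chi {A : Type*} [CommRing A] (m : ℕ) (t : Fin m → Aˣ) (l : ℤ) : A :=
  if 0 ≤ l then
    ∑ r ∈ Finset.Nat.antidiagonalTuple m l.toNat, ∏ i, (((t i)⁻¹ : Aˣ) : A) ^ r i
  else if -(m : ℤ) < l then 0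
  else (-1 : A) ^ (m + 1) * (∏ i, ((t i : Aˣ) : A)) *
    ∑ r ∈ Finset.Nat.antidiagonalTuple m (-l - m).toNat, ∏ i, ((t i : Aˣ) : A) ^ r i

/-- The `d`-th elementary symmetric polynomial evaluated at `f 0, …, f (m-1)` (with `esymm m f 0 = 1`). -/
def esymm {A : Type*} [CommRing A] (m : ℕ) (f : Fin m → A) (d : ℕ) : A :=
  ∑ s ∈ Finset.powersetCard d (Finset.univ : Finset (Fin m)), ∏ i ∈ s, f i

/-- The family `t₁^k, …, t_m^k`. -/
def tk {A : Type*} [CommRing A] {m : ℕ} (t : Fin m → Aˣ) (k : ℤ) : Fin m → A :=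
  fun i => ((t i ^ k : Aˣ) : A)

/-- The coefficient of `T^l` in the polynomial `B_{n,k}^j` of the paper (with `m = n + 1`):
`Σ_{i=1}^{m-l} (-1)^{i+l+1} χ_{n, ik+j} s_{i+l}(t₁^k, …, t_m^k)`. -/
def Bcoeff {A : Type*} [CommRing A] (m : ℕ) (t : Fin m → Aˣ) (k j : ℤ) (l : ℕ) : A :=
  ∑ i ∈ Finset.Icc 1 (m - l),
    (-1 : A) ^ (i + l + 1) * chi m t ((i : ℤ) * k + j) * esymm m (tk t k) (i + l)

/-- The polynomial `B_{n,k}^j = Σ_{l=0}^{n} Bcoeff l · T^l` of the paper (with `m = n + 1`). -/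
def Bpoly {A : Type*} [CommRing A] (m : ℕ) (t : Fin m → Aˣ) (k j : ℤ) : Polynomial A :=
  ∑ l ∈ Finset.range m, Polynomial.C (Bcoeff m t k j l) * Polynomial.X ^ l

def hsum {A : Type*} [CommRing A] (m d : ℕ) (f : Fin m → A) : A :=
  ∑ r ∈ Finset.Nat.antidiagonalTuple m d, ∏ i, f i ^ r i

theorem hsum_zero {A : Type*} [CommRing A] (m : ℕ) (f : Fin m → A) : hsum m 0 f = 1 := by
  simp [hsum, Finset.Nat.antidiagonalTuple_zero_right]

theorem hsum_cons {A : Type*} [CommRing A] (m d : ℕ) (f : Fin (m+1) → A) :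
    hsum (m+1) d f = ∑ p ∈ Finset.HasAntidiagonal.antidiagonal d, f 0 ^ p.1 * hsum m p.2 (f ∘ Fin.succ) := by
  simp only [hsum, Finset.mul_sum, Finset.sum_sigma']
  refine Finset.sum_nbij'
    (fun r => (⟨(r 0, ∑ i, r (Fin.succ i)), r ∘ Fin.succ⟩ : (_ : ℕ × ℕ) × (Fin m → ℕ)))
    (fun x => Fin.cons x.1.1 x.2) ?_ ?_ ?_ ?_ ?_
  · intro r h
    simp only [Finset.Nat.mem_antidiagonalTuple, Finset.mem_sigma, Finset.HasAntidiagonal.mem_antidiagonal] at h ⊢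
    exact ⟨by rw [← h, Fin.sum_univ_succ], by simp [Finset.Nat.mem_antidiagonalTuple, Function.comp]⟩
  · rintro ⟨⟨a, b⟩, r⟩ h
    simp only [Finset.mem_sigma, Finset.HasAntidiagonal.mem_antidiagonal, Finset.Nat.mem_antidiagonalTuple] at h ⊢
    rw [Fin.sum_cons, h.2, h.1]
  · intro r h
    exact funext fun i => by cases i using Fin.cases <;> simp
  · rintro ⟨⟨a, b⟩, r⟩ h
    simp only [Finset.mem_sigma, Finset.mem_antidiagonal, Finset.Nat.mem_antidiagonalTuple] at h
    refine Sigma.ext ?_ (heq_of_eq (funext fun i => by simp))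
    simp [h.2]
  · intro r h
    rw [Fin.prod_univ_succ]
    simp [Function.comp]

theorem hsum_rev {A : Type*} [CommRing A] (m d : ℕ) (f : Fin m → A) :
    hsum m d (f ∘ Fin.rev) = hsum m d f := by
  unfold hsum
  refine Finset.sum_nbij' (fun r => r ∘ Fin.rev) (fun r => r ∘ Fin.rev) ?_ ?_ ?_ ?_ ?_
  · intro r h
    simp only [Finset.Nat.mem_antidiagonalTuple] at h ⊢
    rw [← h]; exact Fintype.sum_equiv (Fin.revPerm) _ _ (fun i => rfl)
  · intro r h
    simp only [Finset.Nat.mem_antidiagonalTuple] at h ⊢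
    rw [← h]; exact Fintype.sum_equiv (Fin.revPerm) _ _ (fun i => rfl)
  · intro r _; exact funext fun i => by simp [Function.comp]
  · intro r _; exact funext fun i => by simp [Function.comp]
  · intro r _
    exact Fintype.prod_equiv (Fin.revPerm) _ _ (fun i => by simp [Function.comp])

theorem hsum_succ_first {A : Type*} [CommRing A] (m d : ℕ) (f : Fin (m+1) → A) :
    hsum (m+1) (d+1) f = hsum m (d+1) (f ∘ Fin.succ) + f 0 * hsum (m+1) d f := by
  rw [hsum_cons, Finset.Nat.antidiagonal_succ, Finset.sum_cons, Finset.sum_map]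
  simp only [pow_zero, one_mul]
  congr 1
  rw [hsum_cons m d f, Finset.mul_sum]
  refine Finset.sum_congr rfl fun p hp => ?_
  simp [pow_succ, mul_comm, mul_assoc, mul_left_comm]

theorem hsum_succ_last {A : Type*} [CommRing A] (m d : ℕ) (f : Fin (m+1) → A) :
    hsum (m+1) (d+1) f
      = hsum m (d+1) (f ∘ Fin.castSucc) + f (Fin.last m) * hsum (m+1) d f := by
  rw [← hsum_rev (m+1) (d+1) f, hsum_succ_first]
  have h1 : (f ∘ Fin.rev) ∘ Fin.succ = (f ∘ Fin.castSucc) ∘ Fin.rev := by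
    funext i; simp [Function.comp, Fin.rev_succ]
  rw [h1, hsum_rev, hsum_rev]
  simp [Function.comp]

theorem chi_of_nonneg {A : Type*} [CommRing A] {m : ℕ} (t : Fin m → Aˣ) {l : ℤ} (h : 0 ≤ l) :
    chi m t l = hsum m l.toNat (fun i => (((t i)⁻¹ : Aˣ) : A)) := by
  rw [chi, if_pos h]; rfl

theorem chi_of_neg_small {A : Type*} [CommRing A] {m : ℕ} (t : Fin m → Aˣ) {l : ℤ}
    (h1 : -(m : ℤ) < l) (h2 : l < 0) : chi m t l = 0 := by
  rw [chi, if_neg (by omega), if_pos h1]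

theorem chi_of_le {A : Type*} [CommRing A] {m : ℕ} (t : Fin m → Aˣ) {l : ℤ}
    (hm : 0 < m) (h : l ≤ -(m : ℤ)) :
    chi m t l = (-1 : A) ^ (m + 1) * (∏ i, ((t i : Aˣ) : A)) *
      hsum m (-l - m).toNat (fun i => ((t i : Aˣ) : A)) := by
  rw [chi, if_neg (by omega), if_neg (by omega)]; rfl

theorem chi_zero {A : Type*} [CommRing A] {m : ℕ} (t : Fin m → Aˣ) : chi m t 0 = 1 := by
  rw [chi_of_nonneg t le_rfl]; exact hsum_zero m _

theorem chi_rec {A : Type*} [CommRing A] (n : ℕ) (hn : 1 ≤ n) (t : Fin (n + 1) → Aˣ) (l : ℤ) :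
    chi (n + 1) t l = chi n (t ∘ Fin.castSucc) l
      + (((t (Fin.last n))⁻¹ : Aˣ) : A) * chi (n + 1) t (l - 1) := by
  have huu : (((t (Fin.last n))⁻¹ : Aˣ) : A) * ((t (Fin.last n) : Aˣ) : A) = 1 :=
    Units.inv_mul _
  have hprod : (∏ i, ((t i : Aˣ) : A))
      = (∏ i, ((t (Fin.castSucc i) : Aˣ) : A)) * ((t (Fin.last n) : Aˣ) : A) :=
    Fin.prod_univ_castSucc _
  rcases le_or_gt 1 l with h1 | h1
  · -- l ≥ 1
    rw [chi_of_nonneg t (by omega), chi_of_nonneg _ (by omega), chi_of_nonneg t (by omega)]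
    have hd : l.toNat = (l - 1).toNat + 1 := by omega
    rw [hd, hsum_succ_last]
    rfl
  rcases eq_or_lt_of_le (by omega : l ≤ 0) with h0 | h0
  · subst h0
    rw [chi_zero, chi_zero, chi_of_neg_small t (by push_cast; omega) (by omega)]
    ring
  rcases lt_or_ge (-(n : ℤ)) l with h2 | h2
  · -- -n < l < 0
    rw [chi_of_neg_small t (by push_cast; omega) h0,
      chi_of_neg_small _ (by omega) h0,
      chi_of_neg_small t (by push_cast; omega) (by omega)]
    ring
  rcases eq_or_lt_of_le h2 with h3 | h3
  · -- l = -n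
    rw [chi_of_neg_small t (by push_cast; omega) h0,
      chi_of_le _ (by omega) (by omega),
      chi_of_le t (by omega) (by push_cast; omega)]
    have e1 : (-l - (n : ℤ)).toNat = 0 := by omega
    have e2 : (-(l - 1) - ((n : ℕ) + 1 : ℕ)).toNat = 0 := by push_cast; omega
    rw [e1, e2, hsum_zero, hsum_zero, hprod]
    simp only [Function.comp_def]
    linear_combination (-((-1 : A) ^ (n + 1 + 1) * ∏ i, ((t (Fin.castSucc i) : Aˣ) : A))) * huu
  · -- l ≤ -(n+1)
    rw [chi_of_le t (by omega) (by push_cast; omega),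
      chi_of_le _ (by omega) (by omega),
      chi_of_le t (by omega) (by push_cast; omega)]
    have e1 : (-l - (n : ℤ)).toNat = (-l - ((n : ℕ) + 1 : ℕ)).toNat + 1 := by push_cast; omega
    have e2 : (-(l - 1) - ((n : ℕ) + 1 : ℕ)).toNat = (-l - ((n : ℕ) + 1 : ℕ)).toNat + 1 := by
      push_cast; omega
    rw [e1, e2, hsum_succ_last (f := fun i => ((t i : Aˣ) : A)), hprod]
    simp only [Function.comp_def]
    set d : ℕ := (-l - ((n : ℕ) + 1 : ℕ)).toNat with hdd
    set P : A := ∏ i, ((t (Fin.castSucc i) : Aˣ) : A) with hP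
    set H1 : A := hsum n (d + 1) fun i : Fin n => ((t (Fin.castSucc i) : Aˣ) : A) with hH1
    set H2 : A := hsum (n + 1) d fun i => ((t i : Aˣ) : A) with hH2
    linear_combination
      (-((-1 : A) ^ (n + 1 + 1) * P * H1 + (-1 : A) ^ (n + 1 + 1) * P
        * ((t (Fin.last n) : Aˣ) : A) * H2)) * huu

theorem chi_iter {A : Type*} [CommRing A] (n : ℕ) (hn : 1 ≤ n) (t : Fin (n + 1) → Aˣ)
    (l : ℤ) (M : ℕ) :
    chi (n + 1) t l
      = (∑ j ∈ Finset.range M,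
          (((t (Fin.last n))⁻¹ : Aˣ) : A) ^ j * chi n (t ∘ Fin.castSucc) (l - j))
        + (((t (Fin.last n))⁻¹ : Aˣ) : A) ^ M * chi (n + 1) t (l - M) := by
  induction M with
  | zero => simp
  | succ M ih =>
    rw [ih, Finset.sum_range_succ, chi_rec n hn t (l - M)]
    push_cast
    have e : l - (M : ℤ) - 1 = l - ((M : ℤ) + 1) := by ring
    rw [e]
    ring

theorem key {A : Type*} [CommRing A] (n : ℕ) (hn : 1 ≤ n) (k : ℤ) (hk : k < 0)
    (t : Fin (n + 1) → Aˣ) (N : ℕ) :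
    (if N = 0 then 0 else chi (n + 1) t (k * N))
        - ((t (Fin.last n) ^ k : Aˣ) : A) * chi (n + 1) t (k * ((N : ℤ) + 1))
      = (if N = 0 then 0 else chi n (t ∘ Fin.castSucc) (k * N))
        + ∑ j ∈ Finset.Icc 1 (k.natAbs - 1),
            ((t (Fin.last n) ^ (k + (j : ℤ)) : Aˣ) : A)
              * chi n (t ∘ Fin.castSucc) (k * ((N : ℤ) + 1) + j) := by
  set u : Aˣ := t (Fin.last n) with hu
  set M : ℕ := k.natAbs with hM
  have hMk : (M : ℤ) = -k := by omega
  have hM1 : 1 ≤ M := by omega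
  have hvpow : ∀ j : ℕ, ((u⁻¹ : Aˣ) : A) ^ j = ((u ^ (-(j : ℤ)) : Aˣ) : A) := by
    intro j
    rw [zpow_neg, zpow_natCast, ← inv_pow]
    push_cast
    rfl
  have hiter := chi_iter n hn t (k * N) M
  have hlast : k * (N : ℤ) - M = k * ((N : ℤ) + 1) := by rw [hMk]; ring
  rw [hlast] at hiter
  have hsplit : (∑ j ∈ Finset.range M,
      (((u⁻¹ : Aˣ) : A)) ^ j * chi n (t ∘ Fin.castSucc) (k * N - j))
      = chi n (t ∘ Fin.castSucc) (k * N)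
        + ∑ j ∈ Finset.Icc 1 (M - 1),
            ((u ^ (k + (j : ℤ)) : Aˣ) : A) * chi n (t ∘ Fin.castSucc) (k * ((N : ℤ) + 1) + j) := by
    rw [Finset.range_eq_Ico, Finset.sum_eq_sum_Ico_succ_bot (by omega : 0 < M)]
    congr 1
    · simp
    · rw [show Finset.Icc 1 (M - 1) = Finset.Ico 1 M by
        rw [← Finset.Ico_add_one_right_eq_Icc]; congr 1; omega]
      refine Finset.sum_nbij' (fun j => M - j) (fun j => M - j) ?_ ?_ ?_ ?_ ?_
      · intro j hj; simp only [Finset.mem_Ico] at hj ⊢; omega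
      · intro j hj; simp only [Finset.mem_Ico] at hj ⊢; omega
      · intro j hj; simp only [Finset.mem_Ico] at hj; omega
      · intro j hj; simp only [Finset.mem_Ico] at hj; omega
      · intro j hj
        simp only [Finset.mem_Ico] at hj
        rw [hvpow j]
        have e2 : (-(j : ℤ)) = k + ((M - j : ℕ) : ℤ) := by omega
        have e3 : k * ((N : ℤ) + 1) + ((M - j : ℕ) : ℤ) = k * N - j := by
          have e1 : ((M - j : ℕ) : ℤ) = (M : ℤ) - j := by omega
          rw [e1, hMk]; ring
        rw [e3, ← e2]
  rw [hsplit] at hiter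
  have hpk : ((u⁻¹ : Aˣ) : A) ^ M = ((u ^ k : Aˣ) : A) := by
    rw [hvpow M, show (-(M : ℤ)) = k by omega]
  rw [hpk] at hiter
  by_cases hN : N = 0
  · subst hN
    simp only [Nat.cast_zero, mul_zero, reduceIte] at hiter ⊢
    rw [chi_zero, chi_zero] at hiter
    linear_combination hiter
  · simp only [if_neg hN]
    linear_combination hiter

/-- Lemma 4.6(2) of the paper, rewritten in the variable `S = t⁻¹` with
denominators cleared.  For `n ≥ 1` and `k < 0`, in `R_{n+1}[[S]]` one has
`(S - t_{n+1}^k) · Σ_{m≥1} χ_{n,km} S^m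
  = S · Σ_{m≥1} χ_{n-1,km} S^m + Σ_{j=1}^{|k|-1} t_{n+1}^{k+j} · (Σ_{m≥1} χ_{n-1,km+j} S^m)`. -/
theorem generating_series_recurrence_negative {A : Type*} [CommRing A]
    (n : ℕ) (hn : 1 ≤ n) (k : ℤ) (hk : k < 0) (t : Fin (n + 1) → Aˣ) :
    (PowerSeries.X - PowerSeries.C ((t (Fin.last n) ^ k : Aˣ) : A)) *
        PowerSeries.mk (fun m => if m = 0 then 0 else chi (n + 1) t (k * (m : ℤ))) =
      PowerSeries.X *
          PowerSeries.mk (fun m => if m = 0 then 0 else chi n (t ∘ Fin.castSucc) (k * (m : ℤ))) +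
        ∑ j ∈ Finset.Icc 1 (k.natAbs - 1),
          PowerSeries.C ((t (Fin.last n) ^ (k + (j : ℤ)) : Aˣ) : A) *
            PowerSeries.mk
              (fun m => if m = 0 then 0 else chi n (t ∘ Fin.castSucc) (k * (m : ℤ) + j)) := by
  refine PowerSeries.ext fun N => ?_
  rw [sub_mul]
  simp only [map_sub, map_add, map_sum, PowerSeries.coeff_C_mul, PowerSeries.coeff_mk]
  cases N with
  | zero =>
    simp [PowerSeries.coeff_zero_X_mul]
  | succ N =>
    rw [PowerSeries.coeff_succ_X_mul, PowerSeries.coeff_succ_X_mul]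
    simp only [PowerSeries.coeff_mk, Nat.succ_ne_zero, if_false]
    have h := key n hn k hk t N
    push_cast at h ⊢
    linear_combination h
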